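/- Let κ ≥ 1/2 and π ∈ ℝ^{N−1} be such that the pair (s, w) given by s := λ₁ − κ⁻¹ xᵀr and w := κx + Xπ solves the system (∗). Then for every solution (s̃, w̃) of (∗) with (s̃, w̃) ≠ (s, w), either s > s̃ or xᵀw̃ < 0. -/

import Mathlib

open Matrix Finset

/-!
In the orthonormal eigenbasis `(x, X)` the equation `S w = σ w + r` decouples into
`(λₐ - σ) wₐ = rₐ`. From `κ ≥ 1/2` and `‖r‖ ≤ λ̂/8` one gets `λ₁ - s ≤ λ̂/4`, so every `σ ≥ s`
stays `3λ̂/4` away from `λ₂, …, λ_N`. Hence, for a second solution with `s ≤ s̃` and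
`α := xᵀw̃ ≥ 0`, both `X`-parts have squared norm `≤ 1/36`, so `α ≥ 1/2`. Raising the shift by
`δ := s̃ - s` lowers the squared `X`-part by some `D` with `0 ≤ D ≤ 2δ/(27 λ̂)`, while the
`x`-components satisfy `(α - κ)(λ₁ - s) = α δ`. Equal norms give `α² - κ² = D`, whence
`δ/2 ≤ (α + κ) α δ = D (λ₁ - s) ≤ δ/54`, so `δ = 0`, and the decoupled equations force `w̃ = w`.
-/

section OrthonormalFamily

variable {n : Type*} [Fintype n] [DecidableEq n] {u : n → n → ℝ}

theorem sum_dotProduct_smul_of_orthonormal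
    (hu : ∀ a b, u a ⬝ᵥ u b = if a = b then 1 else 0) (v : n → ℝ) :
    ∑ a, (u a ⬝ᵥ v) • u a = v := by
  set P : Matrix n n ℝ := of fun i a => u a i
  have hPtP : Pᵀ * P = 1 := by
    ext a b
    simpa [P, mul_apply, one_apply, dotProduct] using hu a b
  have hPPt : P * Pᵀ = 1 := mul_eq_one_comm.mp hPtP
  have hsum : ∑ a, (u a ⬝ᵥ v) • u a = P *ᵥ (Pᵀ *ᵥ v) := by
    funext i
    simp [P, mulVec, dotProduct, Finset.sum_apply, mul_comm]
  rw [hsum, mulVec_mulVec, hPPt, one_mulVec]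

theorem dotProduct_self_eq_sum_sq_of_orthonormal
    (hu : ∀ a b, u a ⬝ᵥ u b = if a = b then 1 else 0) (v : n → ℝ) :
    v ⬝ᵥ v = ∑ a, (u a ⬝ᵥ v) ^ 2 := by
  nth_rewrite 2 [← sum_dotProduct_smul_of_orthonormal hu v]
  simp [dotProduct_sum, dotProduct_comm (u _) v, sq]

theorem eq_of_dotProduct_eq_of_orthonormal
    (hu : ∀ a b, u a ⬝ᵥ u b = if a = b then 1 else 0) {v v' : n → ℝ}
    (h : ∀ a, u a ⬝ᵥ v = u a ⬝ᵥ v') : v = v' := by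
  rw [← sum_dotProduct_smul_of_orthonormal hu v, ← sum_dotProduct_smul_of_orthonormal hu v']
  simp only [h]

theorem dotProduct_mulVec_of_orthonormal_eigenbasis
    (hu : ∀ a b, u a ⬝ᵥ u b = if a = b then 1 else 0) {S : Matrix n n ℝ} {μ : n → ℝ}
    (hS : ∀ a, S *ᵥ u a = μ a • u a) (a : n) (v : n → ℝ) :
    u a ⬝ᵥ (S *ᵥ v) = μ a * (u a ⬝ᵥ v) := by
  conv_lhs => rw [← sum_dotProduct_smul_of_orthonormal hu v]
  simp [mulVec_sum, mulVec_smul, hS, dotProduct_sum, hu, mul_comm]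

theorem sub_mul_dotProduct_eq_of_mulVec_eq
    (hu : ∀ a b, u a ⬝ᵥ u b = if a = b then 1 else 0) {S : Matrix n n ℝ} {μ : n → ℝ}
    (hS : ∀ a, S *ᵥ u a = μ a • u a) {σ : ℝ} {v r : n → ℝ} (hv : S *ᵥ v = σ • v + r) (a : n) :
    (μ a - σ) * (u a ⬝ᵥ v) = u a ⬝ᵥ r := by
  have h := dotProduct_mulVec_of_orthonormal_eigenbasis hu hS a v
  rw [hv, dotProduct_add, dotProduct_smul, smul_eq_mul] at h
  linear_combination -h

end OrthonormalFamily

theorem dotProduct_cons_cons {n : Type*} [Fintype n] {M : ℕ} {x : n → ℝ} {v : Fin M → n → ℝ}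
    (hxx : x ⬝ᵥ x = 1) (hxv : ∀ j, x ⬝ᵥ v j = 0)
    (hvv : ∀ j k, v j ⬝ᵥ v k = if j = k then 1 else 0) (a b : Fin (M + 1)) :
    (Fin.cons x v : Fin (M + 1) → n → ℝ) a ⬝ᵥ (Fin.cons x v : Fin (M + 1) → n → ℝ) b
      = if a = b then 1 else 0 := by
  cases a using Fin.cases <;> cases b using Fin.cases
  · simpa using hxx
  · simpa [(Fin.succ_ne_zero _).symm] using hxv _
  · simpa [dotProduct_comm, Fin.succ_ne_zero] using hxv _
  · simpa [Fin.succ_inj] using hvv _ _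

theorem sq_mul_sum_sq_le {ι : Type*} [Fintype ι] {d σ : ℝ} {μ c q : ι → ℝ} (hd : 0 ≤ d)
    (hfar : ∀ j, d ≤ σ - μ j) (h : ∀ j, (μ j - σ) * c j = q j) :
    d ^ 2 * ∑ j, c j ^ 2 ≤ ∑ j, q j ^ 2 := by
  rw [mul_sum]
  refine sum_le_sum fun j _ => ?_
  have hdj : d ^ 2 ≤ (σ - μ j) ^ 2 := pow_le_pow_left₀ hd (hfar j) 2
  calc d ^ 2 * c j ^ 2 ≤ (σ - μ j) ^ 2 * c j ^ 2 := by gcongr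
    _ = q j ^ 2 := by rw [← h j]; ring

theorem sq_sub_sq_bounds_of_mul_eq {d t δ c c' : ℝ} (hd : 0 < d) (hdt : d ≤ t) (hδ : 0 ≤ δ)
    (h : c * t = c' * (t + δ)) :
    0 ≤ c ^ 2 - c' ^ 2 ∧ (c ^ 2 - c' ^ 2) * d ≤ 2 * δ * c ^ 2 := by
  have ht : 0 < t + δ := by linarith
  have key : (c ^ 2 - c' ^ 2) * (t + δ) ^ 2 = c ^ 2 * δ * (2 * t + δ) := by
    linear_combination (c * t + c' * (t + δ)) * h
  have hnonneg : 0 ≤ c ^ 2 - c' ^ 2 := by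
    refine nonneg_of_mul_nonneg_left (b := (t + δ) ^ 2) ?_ (by positivity)
    rw [key]; have : 0 ≤ 2 * t + δ := by linarith
    positivity
  refine ⟨hnonneg, ?_⟩
  calc (c ^ 2 - c' ^ 2) * d ≤ (c ^ 2 - c' ^ 2) * (t + δ) :=
        mul_le_mul_of_nonneg_left (by linarith) hnonneg
    _ ≤ 2 * δ * c ^ 2 := by
        refine le_of_mul_le_mul_right ?_ ht
        calc (c ^ 2 - c' ^ 2) * (t + δ) * (t + δ) = c ^ 2 * δ * (2 * t + δ) := by
              rw [← key]; ring
          _ ≤ 2 * δ * c ^ 2 * (t + δ) := by nlinarith [mul_nonneg (sq_nonneg c) hδ]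

theorem sub_le_of_mul_eq_of_sq_le {lam1 s κ r₀ gap : ℝ} (hgap : 0 ≤ gap) (hκ : 1 / 2 ≤ κ)
    (hr₀ : r₀ ^ 2 ≤ (gap / 8) ^ 2) (h₀ : (lam1 - s) * κ = r₀) : lam1 - s ≤ gap / 4 := by
  have := le_of_sq_le_sq hr₀ (by positivity)
  nlinarith

theorem shift_eq_of_le {ι : Type*} [Fintype ι]
    {lam1 gap ρ r₀ s s' κ α : ℝ} {μ q c c' : ι → ℝ}
    (hgap : 0 < gap) (hμ : ∀ j, μ j ≤ lam1 - gap) (hr : r₀ ^ 2 + ∑ j, q j ^ 2 ≤ (gap / 8) ^ 2)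
    (hρ : -(1 / 2) ≤ ρ) (hκ : 1 / 2 ≤ κ) (hα : 0 ≤ α)
    (h₀ : (lam1 - s) * κ = r₀) (h₀' : (lam1 - s') * α = r₀)
    (h : ∀ j, (μ j - s) * c j = q j) (h' : ∀ j, (μ j - s') * c' j = q j)
    (hn : κ ^ 2 + ∑ j, c j ^ 2 = 1 + ρ) (hn' : α ^ 2 + ∑ j, c' j ^ 2 = 1 + ρ)
    (hss' : s ≤ s') : s' = s := by
  set δ := s' - s
  have hδ : 0 ≤ δ := sub_nonneg.mpr hss'
  have hq : ∑ j, q j ^ 2 ≤ (gap / 8) ^ 2 := by linarith [sq_nonneg r₀]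
  have hq₀ : 0 ≤ ∑ j, q j ^ 2 := sum_nonneg fun j _ => sq_nonneg (q j)
  have hs : lam1 - s ≤ gap / 4 := sub_le_of_mul_eq_of_sq_le hgap.le hκ (by linarith) h₀
  have hfar : ∀ σ, s ≤ σ → ∀ j, 3 * gap / 4 ≤ σ - μ j := fun σ hσ j => by linarith [hμ j]
  have hsmall : ∀ σ (e : ι → ℝ), s ≤ σ → (∀ j, (μ j - σ) * e j = q j) →
      ∑ j, e j ^ 2 ≤ 1 / 36 := by
    intro σ e hσ he
    refine le_of_mul_le_mul_left (a := (3 * gap / 4) ^ 2) ?_ (by positivity)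
    linarith [(sq_mul_sum_sq_le (by positivity) (hfar σ hσ) he).trans hq]
  have hc := hsmall s c le_rfl h
  have hα_half : 1 / 2 ≤ α := by nlinarith [hsmall s' c' hss' h']
  have hterm : ∀ j, 0 ≤ c j ^ 2 - c' j ^ 2 ∧
      (c j ^ 2 - c' j ^ 2) * (3 * gap / 4) ≤ 2 * δ * c j ^ 2 :=
    fun j => sq_sub_sq_bounds_of_mul_eq (by positivity) (hfar s le_rfl j) hδ
      (by linear_combination h' j - h j)
  have hDα : ∑ j, (c j ^ 2 - c' j ^ 2) = α ^ 2 - κ ^ 2 := by rw [sum_sub_distrib]; linarith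
  set D := ∑ j, (c j ^ 2 - c' j ^ 2)
  have hD₀ : 0 ≤ D := sum_nonneg fun j _ => (hterm j).1
  have hD : D * (3 * gap / 4) ≤ 2 * δ * ∑ j, c j ^ 2 := by
    rw [sum_mul, mul_sum]; exact sum_le_sum fun j _ => (hterm j).2
  have hlin : D * (lam1 - s) = (α + κ) * α * δ := by
    rw [hDα]; linear_combination (α + κ) * (h₀' - h₀)
  have hακ : 1 / 2 ≤ (α + κ) * α := by nlinarith
  have : δ / 2 ≤ δ / 54 := calc
    δ / 2 = 1 / 2 * δ := by ring
    _ ≤ (α + κ) * α * δ := mul_le_mul_of_nonneg_right hακ hδ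
    _ = D * (lam1 - s) := hlin.symm
    _ ≤ D * (gap / 4) := mul_le_mul_of_nonneg_left hs hD₀
    _ ≤ δ / 54 := by linarith [mul_le_mul_of_nonneg_left hc hδ]
  linarith

theorem shift_eq_and_coords_eq_of_le {ι : Type*} [Fintype ι]
    {lam1 gap ρ r₀ s s' κ α : ℝ} {μ q c c' : ι → ℝ}
    (hgap : 0 < gap) (hμ : ∀ j, μ j ≤ lam1 - gap) (hr : r₀ ^ 2 + ∑ j, q j ^ 2 ≤ (gap / 8) ^ 2)
    (hρ : -(1 / 2) ≤ ρ) (hκ : 1 / 2 ≤ κ) (hα : 0 ≤ α)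
    (h₀ : (lam1 - s) * κ = r₀) (h₀' : (lam1 - s') * α = r₀)
    (h : ∀ j, (μ j - s) * c j = q j) (h' : ∀ j, (μ j - s') * c' j = q j)
    (hn : κ ^ 2 + ∑ j, c j ^ 2 = 1 + ρ) (hn' : α ^ 2 + ∑ j, c' j ^ 2 = 1 + ρ)
    (hss' : s ≤ s') : s' = s ∧ α = κ ∧ c' = c := by
  obtain rfl := shift_eq_of_le hgap hμ hr hρ hκ hα h₀ h₀' h h' hn hn' hss'
  have hq₀ : 0 ≤ ∑ j, q j ^ 2 := sum_nonneg fun j _ => sq_nonneg (q j)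
  have hs : lam1 - s' ≤ gap / 4 := sub_le_of_mul_eq_of_sq_le hgap.le hκ (by linarith) h₀
  have hc : c' = c := funext fun j =>
    mul_left_cancel₀ (by linarith [hμ j] : μ j - s' ≠ 0) ((h' j).trans (h j).symm)
  subst hc
  exact ⟨rfl, (pow_left_inj₀ hα (by linarith) two_ne_zero).mp (by linarith), rfl⟩

theorem eq_of_le_of_mulVec_eq_smul_add {M : ℕ} {u : Fin (M + 1) → Fin (M + 1) → ℝ}
    (hu : ∀ a b, u a ⬝ᵥ u b = if a = b then 1 else 0) {S : Matrix (Fin (M + 1)) (Fin (M + 1)) ℝ}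
    {μ : Fin (M + 1) → ℝ} (hS : ∀ a, S *ᵥ u a = μ a • u a) {gap ρ s s' : ℝ}
    {r w w' : Fin (M + 1) → ℝ} (hgap : 0 < gap) (hμ : ∀ j : Fin M, μ j.succ ≤ μ 0 - gap)
    (hr : √(r ⬝ᵥ r) ≤ gap / 8) (hρ : -(1 / 2) ≤ ρ) (hκ : 1 / 2 ≤ u 0 ⬝ᵥ w) (hα : 0 ≤ u 0 ⬝ᵥ w')
    (hw : S *ᵥ w = s • w + r) (hw' : S *ᵥ w' = s' • w' + r)
    (hn : w ⬝ᵥ w = 1 + ρ) (hn' : w' ⬝ᵥ w' = 1 + ρ) (hss' : s ≤ s') : s' = s ∧ w' = w := by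
  have coord {σ v} (hv : S *ᵥ v = σ • v + r) := sub_mul_dotProduct_eq_of_mulVec_eq hu hS hv
  have hr' : r ⬝ᵥ r ≤ (gap / 8) ^ 2 := (Real.sqrt_le_iff.mp hr).2
  rw [dotProduct_self_eq_sum_sq_of_orthonormal hu, Fin.sum_univ_succ] at hr' hn hn'
  obtain ⟨rfl, h₀, hsucc⟩ := shift_eq_and_coords_eq_of_le hgap hμ hr' hρ hκ hα (coord hw 0)
    (coord hw' 0) (fun j => coord hw j.succ) (fun j => coord hw' j.succ) hn hn' hss'
  refine ⟨rfl, eq_of_dotProduct_eq_of_orthonormal hu fun a => ?_⟩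
  cases a using Fin.cases
  · exact h₀
  · exact congrFun hsucc _

/-- Lemma 5.6 (ii) of Hakula–Laaksonen: the solution `(s, w)` constructed in part (i)
is dominant: any other solution `(s̃, w̃)` of the system satisfies `s̃ < s` or `xᵀw̃ < 0`. -/
theorem stmt1 (N : ℕ) (hN : 2 ≤ N)
    (S : Matrix (Fin N) (Fin N) ℝ)
    (x : Fin N → ℝ) (X : Matrix (Fin N) (Fin (N - 1)) ℝ)
    (lam1 : ℝ) (lam2 : Fin (N - 1) → ℝ)
    (hSx : S *ᵥ x = lam1 • x)
    (hSX : ∀ j, S *ᵥ (fun i => X i j) = lam2 j • (fun i => X i j))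
    (hxx : x ⬝ᵥ x = 1)
    (hxX : ∀ j, x ⬝ᵥ (fun i => X i j) = 0)
    (hXX : ∀ j k, (fun i => X i j) ⬝ᵥ (fun i => X i k) = if j = k then (1 : ℝ) else 0)
    (hord : Antitone lam2)
    (hsep : lam2 ⟨0, by omega⟩ < lam1)
    (ρ : ℝ) (r : Fin N → ℝ)
    (hρ : |ρ| ≤ 1 / 2)
    (hr : Real.sqrt (r ⬝ᵥ r) ≤ (lam1 - lam2 ⟨0, by omega⟩) / 8)
    (κ : ℝ) (π : Fin (N - 1) → ℝ) (hκ : 1 / 2 ≤ κ)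
    (s : ℝ)
    (w : Fin N → ℝ) (hw : w = κ • x + X *ᵥ π)
    (hsolve1 : S *ᵥ w = s • w + r)
    (hsolve2 : w ⬝ᵥ w = 1 + ρ) :
    ∀ (s' : ℝ) (w' : Fin N → ℝ),
      S *ᵥ w' = s' • w' + r → w' ⬝ᵥ w' = 1 + ρ →
      ¬(s' = s ∧ w' = w) → s' < s ∨ x ⬝ᵥ w' < 0 := by
  obtain ⟨M, rfl⟩ : ∃ M, N = M + 1 := ⟨N - 1, by omega⟩
  intro s' w' hsolve1' hsolve2' hne
  by_contra! hcon
  have hxw : x ⬝ᵥ w = κ := by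
    have hxX' : x ᵥ* X = 0 := funext hxX
    rw [hw, dotProduct_add, dotProduct_smul, hxx, dotProduct_mulVec, hxX', zero_dotProduct,
      smul_eq_mul, mul_one, add_zero]
  have hμ : ∀ j, lam2 j ≤ lam1 - (lam1 - lam2 ⟨0, by omega⟩) := fun j => by
    linarith [hord (show (⟨0, by omega⟩ : Fin (M + 1 - 1)) ≤ j from Nat.zero_le _)]
  set u : Fin (M + 1) → Fin (M + 1) → ℝ := Fin.cons x fun j i => X i j
  have hS : ∀ a, S *ᵥ u a = (Fin.cons lam1 lam2 : Fin (M + 1) → ℝ) a • u a := by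
    intro a
    cases a using Fin.cases
    exacts [hSx, hSX _]
  exact hne <| eq_of_le_of_mulVec_eq_smul_add (dotProduct_cons_cons hxx hxX hXX) hS
    (sub_pos.mpr hsep) hμ hr (abs_le.mp hρ).1 (hxw ▸ hκ) hcon.2 hsolve1 hsolve1' hsolve2
    hsolve2' hcon.1
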